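/- arXiv:2408.03233 — 2 statements merged into one kernel-verified Lean document; each statement's English description precedes it below -/
import Mathlib

section
/- Fix β with 0 < |β| ≤ 1/2. For any M > 0 and λ₀ > 0 there exists C > 0 such that for all ν of the form ν = |l+β| with l an integer and ν ≥ 1, all 0 ≤ r ≤ s ≤ M and all complex λ with |λ| < λ₀, one has |csc(νπ) J_ν(λ r) J_{−ν}(λ s)| ≤ C/ν, where the left side denotes the entire extension of this function of λ. -/
open Complex Real

/-- The entire (in `λ`) extension of `csc(νπ) J_ν(λ r) J_{-ν}(λ s)` for `0 ≤ r ≤ s`,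
obtained by combining the prefactors `(λr/2)^ν (λs/2)^{-ν} = (r/s)^ν`. -/
noncomputable def cscJJext (ν : ℝ) (r s : ℝ) (lam : ℂ) : ℂ :=
  (((Real.sin (ν * π))⁻¹ : ℝ) : ℂ) * (((r / s) ^ ν : ℝ) : ℂ) *
    ∑' p : ℕ × ℕ,
      ((-lam ^ 2 * (r : ℂ) ^ 2 / 4) ^ p.1 * (-lam ^ 2 * (s : ℂ) ^ 2 / 4) ^ p.2) /
        ((p.1.factorial : ℂ) * (p.2.factorial : ℂ) *
          Complex.Gamma ((ν : ℂ) + p.1 + 1) * Complex.Gamma (-(ν : ℂ) + p.2 + 1))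

private lemma abs_le_abs_int_add {b : ℝ} (hb : |b| ≤ 1 / 2) (n : ℤ) :
    |b| ≤ |(n : ℝ) + b| := by
  rcases eq_or_ne n 0 with h | h
  · simp [h]
  · have h1 : (1 : ℝ) ≤ |(n : ℝ)| := by
      rw [← Int.cast_abs]
      exact_mod_cast Int.one_le_abs h
    have h2 : |(n : ℝ)| ≤ |(n : ℝ) + b| + |b| := by
      calc |(n : ℝ)| = |((n : ℝ) + b) + (-b)| := by ring_nf
        _ ≤ |(n : ℝ) + b| + |(-b)| := abs_add_le _ _
        _ = |(n : ℝ) + b| + |b| := by rw [abs_neg]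
    linarith

private lemma dist_lemma {β ν : ℝ} (hβhalf : |β| ≤ 1 / 2) (l : ℤ)
    (hν : ν = |(l : ℝ) + β|) (m : ℤ) : |β| ≤ |ν - m| := by
  rcases abs_cases ((l : ℝ) + β) with ⟨h, _⟩ | ⟨h, _⟩
  · have e : ν - m = ((l - m : ℤ) : ℝ) + β := by rw [hν, h]; push_cast; ring
    rw [e]; exact abs_le_abs_int_add hβhalf _
  · have e : ν - m = ((-l - m : ℤ) : ℝ) + (-β) := by rw [hν, h]; push_cast; ring
    rw [e]
    have := abs_le_abs_int_add (b := -β) (by rwa [abs_neg]) (-l - m)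
    rwa [abs_neg] at this

private lemma gamma_shift_bound {β ν : ℝ} (hβ0 : 0 < |β|) (hβhalf : |β| ≤ 1 / 2) (l : ℤ)
    (hν : ν = |(l : ℝ) + β|) (hν1 : 1 ≤ ν) (k : ℕ) :
    |Real.Gamma (ν - k)| ≤ Real.Gamma ν * (|β|⁻¹) ^ k := by
  induction k with
  | zero => simp [abs_of_pos (Real.Gamma_pos_of_pos (by linarith : (0:ℝ) < ν))]
  | succ k ih =>
    have hd : |β| ≤ |ν - ((k : ℝ) + 1)| := by
      simpa using dist_lemma hβhalf l hν (k + 1)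
    have hne : ν - ((k : ℝ) + 1) ≠ 0 := by
      intro h
      rw [h, abs_zero] at hd
      exact absurd hd (not_le.mpr hβ0)
    have hg : Real.Gamma (ν - k) = (ν - ((k : ℝ) + 1)) * Real.Gamma (ν - ((k : ℝ) + 1)) := by
      have := Real.Gamma_add_one hne
      rw [show ν - ((k : ℝ) + 1) + 1 = ν - k by ring] at this
      exact this
    have habs : |Real.Gamma (ν - k)| = |ν - ((k : ℝ) + 1)| * |Real.Gamma (ν - ((k : ℝ) + 1))| := by
      rw [hg, abs_mul]
    have hle : |Real.Gamma (ν - ((k : ℝ) + 1))| ≤ |Real.Gamma (ν - k)| * |β|⁻¹ := by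
      rw [habs]
      rw [mul_comm (|ν - ((k : ℝ) + 1)|) _, mul_assoc]
      have h1 : (1 : ℝ) ≤ |ν - ((k : ℝ) + 1)| * |β|⁻¹ := by
        rw [← div_eq_mul_inv]
        rw [le_div_iff₀ hβ0]
        simpa using hd
      nlinarith [abs_nonneg (Real.Gamma (ν - ((k : ℝ) + 1)))]
    calc |Real.Gamma (ν - ((k : ℕ) + 1 : ℕ))| = |Real.Gamma (ν - ((k : ℝ) + 1))| := by
          push_cast; ring_nf
      _ ≤ |Real.Gamma (ν - k)| * |β|⁻¹ := hle
      _ ≤ Real.Gamma ν * (|β|⁻¹) ^ k * |β|⁻¹ := by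
          have : (0:ℝ) ≤ |β|⁻¹ := by positivity
          nlinarith
      _ = Real.Gamma ν * (|β|⁻¹) ^ (k + 1) := by ring

private lemma gamma_ge {ν : ℝ} (hν1 : 1 ≤ ν) (p : ℕ) :
    Real.Gamma (ν + 1) ≤ Real.Gamma (ν + 1 + p) := by
  induction p with
  | zero => simp
  | succ p ih =>
    have hpos : (0 : ℝ) < ν + 1 + p := by positivity
    have hg : Real.Gamma (ν + 1 + p + 1) = (ν + 1 + p) * Real.Gamma (ν + 1 + p) :=
      Real.Gamma_add_one hpos.ne'
    have hΓ : 0 < Real.Gamma (ν + 1 + p) := Real.Gamma_pos_of_pos hpos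
    calc Real.Gamma (ν + 1) ≤ Real.Gamma (ν + 1 + p) := ih
      _ ≤ (ν + 1 + p) * Real.Gamma (ν + 1 + p) := by nlinarith
      _ = Real.Gamma (ν + 1 + (p + 1 : ℕ)) := by rw [← hg]; push_cast; ring_nf

private lemma abs_sin_add_int (x : ℝ) (m : ℤ) : |Real.sin (x + m * π)| = |Real.sin x| := by
  rw [Real.sin_add_int_mul_pi, abs_mul]
  have h1 : |((-1 : ℝ)) ^ m| = 1 := by
    rcases Int.even_or_odd m with h | h
    · rw [h.neg_one_zpow, abs_one]
    · rw [h.neg_one_zpow, abs_neg, abs_one]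
  rw [h1, one_mul]

private lemma abs_sin_pi_nu {β ν : ℝ} (l : ℤ) (hν : ν = |(l : ℝ) + β|) (m : ℤ) :
    |Real.sin (π * (ν - m))| = |Real.sin (β * π)| := by
  rcases abs_cases ((l : ℝ) + β) with ⟨h, _⟩ | ⟨h, _⟩
  · have e : π * (ν - m) = β * π + ((l - m : ℤ) : ℝ) * π := by rw [hν, h]; push_cast; ring
    rw [e, abs_sin_add_int]
  · have e : π * (ν - m) = -(β * π + ((l + m : ℤ) : ℝ) * π) := by rw [hν, h]; push_cast; ring
    rw [e, Real.sin_neg, abs_neg, abs_sin_add_int]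

private lemma gamma_reflect_lower {β ν : ℝ} (hβ0 : 0 < |β|) (hβhalf : |β| ≤ 1 / 2) (l : ℤ)
    (hν : ν = |(l : ℝ) + β|) (hν1 : 1 ≤ ν) (k : ℕ) :
    π * |β| ^ k / (|Real.sin (β * π)| * Real.Gamma ν) ≤ |Real.Gamma (-ν + k + 1)| := by
  have hΓν : 0 < Real.Gamma ν := Real.Gamma_pos_of_pos (by linarith)
  have hsin : |Real.sin (π * (ν - k))| = |Real.sin (β * π)| := by
    have := abs_sin_pi_nu l hν (k : ℤ)
    simpa using this
  have hsin0 : (0 : ℝ) < |Real.sin (β * π)| := by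
    rw [← hsin, abs_pos]
    intro h0
    have := Real.Gamma_mul_Gamma_one_sub (ν - k)
    rw [h0, div_zero] at this
    have hne1 : Real.Gamma (ν - k) ≠ 0 := by
      apply Real.Gamma_ne_zero
      intro m hm
      have hd := dist_lemma hβhalf l hν ((k : ℤ) - m)
      rw [show ν - ((k : ℤ) - (m : ℤ) : ℤ) = (ν - k) + m by push_cast; ring, hm,
        show -(m : ℝ) + m = 0 by ring, abs_zero] at hd
      exact absurd hd (not_le.mpr hβ0)
    have hne2 : Real.Gamma (1 - (ν - k)) ≠ 0 := by
      apply Real.Gamma_ne_zero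
      intro m hm
      have hd := dist_lemma hβhalf l hν ((k : ℤ) + 1 + m)
      rw [show ν - ((k : ℤ) + 1 + (m : ℤ) : ℤ) = -(1 - (ν - k) + m) by push_cast; ring, hm,
        show -(-(m : ℝ) + m) = 0 by ring, abs_zero] at hd
      exact absurd hd (not_le.mpr hβ0)
    exact mul_ne_zero hne1 hne2 this
  have hΓνk : |Real.Gamma (ν - k)| ≤ Real.Gamma ν * (|β|⁻¹) ^ k :=
    gamma_shift_bound hβ0 hβhalf l hν hν1 k
  have hΓνk0 : (0 : ℝ) < |Real.Gamma (ν - k)| := by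
    rw [abs_pos]
    apply Real.Gamma_ne_zero
    intro m hm
    have hd := dist_lemma hβhalf l hν ((k : ℤ) - m)
    rw [show ν - ((k : ℤ) - (m : ℤ) : ℤ) = (ν - k) + m by push_cast; ring, hm,
      show -(m : ℝ) + m = 0 by ring, abs_zero] at hd
    exact absurd hd (not_le.mpr hβ0)
  have hrefl := Real.Gamma_mul_Gamma_one_sub (ν - k)
  have habs : |Real.Gamma (ν - k)| * |Real.Gamma (-ν + k + 1)| = π / |Real.sin (β * π)| := by
    rw [show (-ν + (k : ℝ) + 1) = 1 - (ν - k) by ring, ← abs_mul, hrefl, abs_div,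
      abs_of_pos Real.pi_pos, hsin]
  have heq : |Real.Gamma (-ν + k + 1)| = π / |Real.sin (β * π)| / |Real.Gamma (ν - k)| := by
    rw [mul_comm] at habs
    exact (eq_div_iff hΓνk0.ne').mpr habs
  rw [heq]
  have hub : (0 : ℝ) < Real.Gamma ν * (|β|⁻¹) ^ k := by positivity
  calc π * |β| ^ k / (|Real.sin (β * π)| * Real.Gamma ν)
      = π / |Real.sin (β * π)| / (Real.Gamma ν * (|β|⁻¹) ^ k) := by
        have hb : (0 : ℝ) < |β| ^ k := by positivity
        rw [inv_pow, div_div,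
          show |Real.sin (β * π)| * (Real.Gamma ν * (|β| ^ k)⁻¹)
            = |Real.sin (β * π)| * Real.Gamma ν / |β| ^ k by field_simp,
          div_div_eq_mul_div]
    _ ≤ π / |Real.sin (β * π)| / |Real.Gamma (ν - k)| := by
        apply div_le_div_of_nonneg_left (by positivity) hΓνk0 hΓνk

set_option maxHeartbeats 2000000

theorem cscJJext_bound (M lam0 β : ℝ) (hM : 0 < M) (hlam0 : 0 < lam0)
    (hβ0 : 0 < |β|) (hβhalf : |β| ≤ 1 / 2) :
    ∃ C > 0, ∀ l : ℤ, ∀ ν : ℝ, ν = |(l : ℝ) + β| → 1 ≤ ν →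
      ∀ r s : ℝ, 0 ≤ r → r ≤ s → s ≤ M →
        ∀ lam : ℂ, ‖lam‖ < lam0 → ‖cscJJext ν r s lam‖ ≤ C / ν := by
  set X : ℝ := lam0 ^ 2 * M ^ 2 / 4 with hXdef
  have hX0 : (0 : ℝ) ≤ X := by positivity
  have hsum1 : Summable (fun n : ℕ => X ^ n / n.factorial) :=
    Real.summable_pow_div_factorial X
  have hsum2 : Summable (fun n : ℕ => (X / |β|) ^ n / n.factorial) :=
    Real.summable_pow_div_factorial _
  set E1 : ℝ := ∑' n : ℕ, X ^ n / n.factorial with hE1def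
  set E2 : ℝ := ∑' n : ℕ, (X / |β|) ^ n / n.factorial with hE2def
  have hE1pos : 0 < E1 := by
    have h0 : (1 : ℝ) ≤ E1 := by
      have := Summable.le_tsum hsum1 0 (fun j _ => by positivity)
      simpa using this
    linarith
  have hE2pos : 0 < E2 := by
    have h0 : (1 : ℝ) ≤ E2 := by
      have := Summable.le_tsum hsum2 0 (fun j _ => by positivity)
      simpa using this
    linarith
  refine ⟨E1 * E2 / π, by positivity, ?_⟩
  intro l ν hν hν1 r s hr hrs hsM lam hlam
  set c : ℝ := |Real.sin (β * π)| with hcdef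
  have hνpos : (0 : ℝ) < ν := by linarith
  have hΓν : 0 < Real.Gamma ν := Real.Gamma_pos_of_pos hνpos
  have hΓν1 : 0 < Real.Gamma (ν + 1) := Real.Gamma_pos_of_pos (by linarith)
  have hc0 : 0 < c := by
    have habs := abs_sin_pi_nu l hν 0
    simp only [Int.cast_zero, sub_zero] at habs
    rw [hcdef, ← habs, abs_pos]
    intro h0
    obtain ⟨n, hn⟩ := Real.sin_eq_zero_iff.mp h0
    have hνn : ν = n := by
      have h2 : π * (n : ℝ) = π * ν := by rw [mul_comm]; exact hn
      have := mul_left_cancel₀ Real.pi_ne_zero h2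
      linarith
    have hd := dist_lemma hβhalf l hν n
    rw [hνn, sub_self, abs_zero] at hd
    exact absurd hd (not_le.mpr hβ0)
  have hsinν : |Real.sin (ν * π)| = c := by
    have := abs_sin_pi_nu l hν 0
    simpa [mul_comm] using this
  -- the series bound
  set A : ℝ := c * Real.Gamma ν / (π * Real.Gamma (ν + 1)) with hAdef
  have hA0 : 0 ≤ A := by positivity
  set F : ℕ × ℕ → ℂ := fun p =>
    ((-lam ^ 2 * (r : ℂ) ^ 2 / 4) ^ p.1 * (-lam ^ 2 * (s : ℂ) ^ 2 / 4) ^ p.2) /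
      ((p.1.factorial : ℂ) * (p.2.factorial : ℂ) *
        Complex.Gamma ((ν : ℂ) + p.1 + 1) * Complex.Gamma (-(ν : ℂ) + p.2 + 1)) with hFdef
  set G : ℕ × ℕ → ℝ := fun p =>
    (A * (X ^ p.1 / p.1.factorial)) * ((X / |β|) ^ p.2 / p.2.factorial) with hGdef
  have hrM : r ≤ M := le_trans hrs hsM
  have hbr : ‖-lam ^ 2 * (r : ℂ) ^ 2 / 4‖ ≤ X := by
    have : ‖-lam ^ 2 * (r : ℂ) ^ 2 / 4‖ = ‖lam‖ ^ 2 * |r| ^ 2 / 4 := by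
      simp [norm_mul, norm_pow, Complex.norm_real]
    rw [this, hXdef, _root_.abs_of_nonneg hr]
    have h2 : ‖lam‖ ^ 2 * r ^ 2 ≤ lam0 ^ 2 * M ^ 2 :=
      mul_le_mul (by nlinarith [norm_nonneg lam]) (by nlinarith) (by positivity) (by positivity)
    linarith
  have hbs : ‖-lam ^ 2 * (s : ℂ) ^ 2 / 4‖ ≤ X := by
    have : ‖-lam ^ 2 * (s : ℂ) ^ 2 / 4‖ = ‖lam‖ ^ 2 * |s| ^ 2 / 4 := by
      simp [norm_mul, norm_pow, Complex.norm_real]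
    rw [this, hXdef, _root_.abs_of_nonneg (le_trans hr hrs)]
    have hs0 : 0 ≤ s := le_trans hr hrs
    have h2 : ‖lam‖ ^ 2 * s ^ 2 ≤ lam0 ^ 2 * M ^ 2 :=
      mul_le_mul (by nlinarith [norm_nonneg lam]) (by nlinarith) (by positivity) (by positivity)
    linarith
  have hFG : ∀ p : ℕ × ℕ, ‖F p‖ ≤ G p := by
    rintro ⟨p1, p2⟩
    have e1 : ((ν : ℂ) + p1 + 1) = ((ν + p1 + 1 : ℝ) : ℂ) := by push_cast; ring
    have e2 : (-(ν : ℂ) + p2 + 1) = ((-ν + p2 + 1 : ℝ) : ℂ) := by push_cast; ring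
    have hΓ1pos : 0 < Real.Gamma (ν + p1 + 1) := Real.Gamma_pos_of_pos (by positivity)
    have hnorm : ‖F (p1, p2)‖ =
        (‖-lam ^ 2 * (r : ℂ) ^ 2 / 4‖ ^ p1 * ‖-lam ^ 2 * (s : ℂ) ^ 2 / 4‖ ^ p2) /
          ((p1.factorial : ℝ) * (p2.factorial : ℝ) * Real.Gamma (ν + p1 + 1) *
            |Real.Gamma (-ν + p2 + 1)|) := by
      rw [hFdef]
      simp only [e1, e2, Complex.Gamma_ofReal]
      rw [norm_div, norm_mul, norm_mul, norm_mul, norm_mul, norm_pow, norm_pow,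
        Complex.norm_natCast, Complex.norm_natCast, Complex.norm_real, Complex.norm_real,
        Real.norm_eq_abs, Real.norm_eq_abs, abs_of_pos hΓ1pos]
    have hglow := gamma_reflect_lower hβ0 hβhalf l hν hν1 p2
    have hgm : Real.Gamma (ν + 1) ≤ Real.Gamma (ν + p1 + 1) := by
      have := gamma_ge hν1 p1
      rwa [show ν + 1 + (p1 : ℝ) = ν + p1 + 1 by ring] at this
    have hDpos : (0 : ℝ) < (p1.factorial : ℝ) * (p2.factorial : ℝ) * Real.Gamma (ν + 1) *
        (π * |β| ^ p2 / (c * Real.Gamma ν)) := by positivity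
    have hkey : ‖F (p1, p2)‖ ≤ (X ^ p1 * X ^ p2) /
        ((p1.factorial : ℝ) * (p2.factorial : ℝ) * Real.Gamma (ν + 1) *
          (π * |β| ^ p2 / (c * Real.Gamma ν))) := by
      rw [hnorm]
      apply div_le_div₀ (by positivity) ?_ hDpos ?_
      · exact mul_le_mul (pow_le_pow_left₀ (norm_nonneg _) hbr p1)
          (pow_le_pow_left₀ (norm_nonneg _) hbs p2) (by positivity) (by positivity)
      · gcongr <;> first
          | exact hgm
          | exact hglow
          | positivity
          | (exact_mod_cast Nat.one_le_iff_ne_zero.mpr (Nat.factorial_ne_zero p1))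
          | (exact_mod_cast Nat.one_le_iff_ne_zero.mpr (Nat.factorial_ne_zero p2))
    refine hkey.trans_eq ?_
    rw [hGdef, hAdef]
    have hfac1 : (0:ℝ) < (p1.factorial : ℝ) := by positivity
    have hfac2 : (0:ℝ) < (p2.factorial : ℝ) := by positivity
    field_simp
    rw [mul_assoc, ← mul_pow, show |β| * (X / |β|) = X by field_simp]
  have hGsum : Summable G := by
    have := (hsum1.mul_left A).mul_of_nonneg hsum2
      (fun n => by positivity) (fun n => by positivity)
    exact this
  have hFnorm : Summable (fun p => ‖F p‖) :=
    Summable.of_nonneg_of_le (fun _ => norm_nonneg _) hFG hGsum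
  have htsumG : ∑' p : ℕ × ℕ, G p = (A * E1) * E2 := by
    rw [hGdef, hE1def, hE2def, ← tsum_mul_left (a := A),
      ← Summable.tsum_mul_tsum (hsum1.mul_left A) hsum2 hGsum]
  have hseries : ‖∑' p : ℕ × ℕ, F p‖ ≤ A * E1 * E2 := by
    calc ‖∑' p : ℕ × ℕ, F p‖ ≤ ∑' p : ℕ × ℕ, ‖F p‖ := norm_tsum_le_tsum_norm hFnorm
      _ ≤ ∑' p : ℕ × ℕ, G p := Summable.tsum_le_tsum hFG hFnorm hGsum
      _ = A * E1 * E2 := htsumG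
  -- the prefactors
  have hpref2 : |(r / s) ^ ν| ≤ 1 := by
    rcases eq_or_lt_of_le (le_trans hr hrs) with hs0 | hs0
    · rw [← hs0]
      simp [Real.zero_rpow hνpos.ne']
    · have h01 : 0 ≤ r / s := div_nonneg hr hs0.le
      have h11 : r / s ≤ 1 := (div_le_one hs0).mpr hrs
      rw [_root_.abs_of_nonneg (Real.rpow_nonneg h01 ν)]
      exact Real.rpow_le_one h01 h11 hνpos.le
  -- assemble
  have hrepr : cscJJext ν r s lam =
      (((Real.sin (ν * π))⁻¹ : ℝ) : ℂ) * (((r / s) ^ ν : ℝ) : ℂ) * ∑' p : ℕ × ℕ, F p := rfl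
  rw [hrepr]
  rw [norm_mul, norm_mul, Complex.norm_real, Complex.norm_real, Real.norm_eq_abs,
    Real.norm_eq_abs, abs_inv, hsinν]
  calc c⁻¹ * |(r / s) ^ ν| * ‖∑' p : ℕ × ℕ, F p‖
      ≤ c⁻¹ * 1 * (A * E1 * E2) := by
        apply mul_le_mul ?_ hseries (norm_nonneg _) (by positivity)
        apply mul_le_mul_of_nonneg_left hpref2 (by positivity)
    _ = E1 * E2 / π / ν := by
        rw [hAdef]
        have hΓ : Real.Gamma (ν + 1) = ν * Real.Gamma ν := Real.Gamma_add_one hνpos.ne'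
        rw [hΓ]
        field_simp
end

section
/- Let β ∈ (0, 1/2], and for l ∈ ℤ set ν_l = |l + β|. For f = Σ_l f_l(r) e^{ilθ} compactly supported in L², define (R₀₀ f)(r,θ) = (1/2) Σ_{l∈ℤ} ν_l^{−1} ∫_0^∞ (r_</r_>)^{ν_l} f_l(r̃) r̃ dr̃ · e^{ilθ}, where r_< = min(r, r̃), r_> = max(r, r̃). Then for any f ∈ L² supported in {r ≤ M}, the function R₀₀ f is well-defined (the series converges in L² on compact sets) and (R₀₀f)(x) → 0 as |x| → ∞. -/
open Complex Real MeasureTheory Filter Set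

theorem R00_welldefined_and_decay (β M : ℝ) (hβ0 : 0 < β) (hβh : β ≤ 1 / 2) (hM : 0 < M)
    (f : ℤ → ℝ → ℂ)
    (hsupp : ∀ l : ℤ, ∀ r : ℝ, M < r → f l r = 0)
    (hint : ∀ l : ℤ, IntervalIntegrable (fun r => ‖f l r‖ ^ 2 * r) volume 0 M)
    (hL2 : Summable fun l : ℤ => ∫ r in (0 : ℝ)..M, ‖f l r‖ ^ 2 * r) :
    -- the series defining R₀₀ f converges absolutely at every point
    (∀ r θ : ℝ, 0 < r →
      Summable fun l : ℤ =>
        ‖(((1 / (2 * |(l : ℝ) + β|)) : ℝ) : ℂ) *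
            (∫ t in (0 : ℝ)..M,
              (((min r t / max r t) ^ |(l : ℝ) + β| : ℝ) : ℂ) * f l t * (t : ℂ)) *
            Complex.exp (Complex.I * (l : ℂ) * (θ : ℂ))‖) ∧
    -- and R₀₀ f tends to 0 at infinity
    (∀ ε > 0, ∃ R : ℝ, ∀ r ≥ R, ∀ θ : ℝ,
      ‖∑' l : ℤ,
          (((1 / (2 * |(l : ℝ) + β|)) : ℝ) : ℂ) *
            (∫ t in (0 : ℝ)..M,
              (((min r t / max r t) ^ |(l : ℝ) + β| : ℝ) : ℂ) * f l t * (t : ℂ)) *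
            Complex.exp (Complex.I * (l : ℂ) * (θ : ℂ))‖ < ε) := by
  have hM' : (0:ℝ) ≤ M := hM.le
  set ν : ℤ → ℝ := fun l => |(l : ℝ) + β| with hνdef
  have hν0 : ∀ l : ℤ, 0 < ν l := by
    intro l
    rw [show ν l = |(l:ℝ) + β| from rfl, abs_pos]
    rcases le_or_gt 0 l with h | h
    · have : (0:ℝ) ≤ (l:ℝ) := by exact_mod_cast h
      intro hc; linarith
    · have h1 : l ≤ -1 := by omega
      have : ((l:ℝ)) ≤ -1 := by exact_mod_cast h1
      intro hc; linarith
  have hνβ : ∀ l : ℤ, β ≤ ν l := by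
    intro l
    show β ≤ |(l:ℝ) + β|
    rcases le_or_gt 0 l with h | h
    · have : (0:ℝ) ≤ (l:ℝ) := by exact_mod_cast h
      have h2 := le_abs_self ((l:ℝ) + β)
      linarith
    · have h1 : l ≤ -1 := by omega
      have h2 : ((l:ℝ)) ≤ -1 := by exact_mod_cast h1
      have h3 := neg_le_abs ((l:ℝ) + β)
      linarith
  -- summability of 1/ν^2
  have hν2 : Summable fun l : ℤ => 1 / ν l ^ 2 := by
    have h := (Real.summable_one_div_int_add_rpow β 2).mpr one_lt_two
    refine h.congr fun l => ?_
    rw [show ((2:ℝ)) = ((2:ℕ):ℝ) by norm_num, Real.rpow_natCast]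
  -- measurability of t ↦ ‖f l t‖ * t
  have hmeas : ∀ l : ℤ, AEStronglyMeasurable (fun t => ‖f l t‖ * t)
      (volume.restrict (Ioc (0:ℝ) M)) := by
    intro l
    have h1 : IntegrableOn (fun r => ‖f l r‖ ^ 2 * r) (Ioc (0:ℝ) M) volume :=
      (intervalIntegrable_iff_integrableOn_Ioc_of_le hM').mp (hint l)
    have h2 : AEStronglyMeasurable (fun t => Real.sqrt ((‖f l t‖ ^ 2 * t) * t))
        (volume.restrict (Ioc (0:ℝ) M)) := by
      apply Real.continuous_sqrt.comp_aestronglyMeasurable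
      exact h1.aestronglyMeasurable.mul aestronglyMeasurable_id
    refine h2.congr ?_
    filter_upwards [ae_restrict_mem measurableSet_Ioc] with t ht
    rw [show ‖f l t‖ ^ 2 * t * t = (‖f l t‖ * t) ^ 2 by ring,
      Real.sqrt_sq (mul_nonneg (norm_nonneg _) ht.1.le)]
  -- integrability of the AM-GM upper bound
  have hIntU : ∀ l : ℤ, IntegrableOn
      (fun t => (ν l * (‖f l t‖ ^ 2 * t) + t / ν l) / 2) (Ioc (0:ℝ) M) volume := by
    intro l
    have h1 : IntegrableOn (fun r => ‖f l r‖ ^ 2 * r) (Ioc (0:ℝ) M) volume :=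
      (intervalIntegrable_iff_integrableOn_Ioc_of_le hM').mp (hint l)
    have h2 : IntegrableOn (fun t : ℝ => t / ν l) (Ioc (0:ℝ) M) volume := by
      apply Integrable.div_const
      exact (continuous_id.integrableOn_Ioc)
    exact ((h1.const_mul (ν l)).add h2).div_const 2
  -- AM-GM pointwise bound
  have hamgm : ∀ (l : ℤ) (t : ℝ), 0 ≤ t →
      ‖f l t‖ * t ≤ (ν l * (‖f l t‖ ^ 2 * t) + t / ν l) / 2 := by
    intro l t ht
    have hν := hν0 l
    have key : 0 ≤ t * (ν l * ‖f l t‖ - 1) ^ 2 := by positivity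
    have h2 : t / ν l * ν l = t := by field_simp
    rw [le_div_iff₀ (by norm_num : (0:ℝ) < 2)]
    nlinarith [key, h2, hν, norm_nonneg (f l t), ht]
  -- integrability of t ↦ ‖f l t‖ * t
  have hInt : ∀ l : ℤ, IntegrableOn (fun t => ‖f l t‖ * t) (Ioc (0:ℝ) M) volume := by
    intro l
    refine Integrable.mono' (hIntU l) (hmeas l) ?_
    filter_upwards [ae_restrict_mem measurableSet_Ioc] with t ht
    rw [Real.norm_eq_abs, _root_.abs_of_nonneg (mul_nonneg (norm_nonneg _) ht.1.le)]
    exact hamgm l t ht.1.le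
  set A : ℤ → ℝ := fun l => ∫ t in Ioc (0:ℝ) M, ‖f l t‖ * t with hAdef
  have hA0 : ∀ l, 0 ≤ A l := by
    intro l
    apply setIntegral_nonneg measurableSet_Ioc
    intro t ht; exact mul_nonneg (norm_nonneg _) ht.1.le
  set a : ℤ → ℝ := fun l => 1 / (2 * ν l) * A l with hadef
  have ha0 : ∀ l, 0 ≤ a l := by
    intro l
    have := hν0 l
    have := hA0 l
    positivity
  -- norm of exponential factor and coefficient
  have hnorm : ∀ (l : ℤ) (x : ℂ) (θ : ℝ),
      ‖(((1 / (2 * ν l)) : ℝ) : ℂ) * x * Complex.exp (Complex.I * (l : ℂ) * (θ : ℂ))‖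
        = 1 / (2 * ν l) * ‖x‖ := by
    intro l x θ
    have hν := hν0 l
    rw [norm_mul, norm_mul]
    have h1 : ‖(((1 / (2 * ν l)) : ℝ) : ℂ)‖ = 1 / (2 * ν l) := by
      rw [Complex.norm_real, Real.norm_eq_abs, abs_of_pos (by positivity)]
    have h2 : ‖Complex.exp (Complex.I * (l:ℂ) * (θ:ℂ))‖ = 1 := by
      have : Complex.I * (l:ℂ) * (θ:ℂ) = (((l : ℝ) * θ : ℝ):ℂ) * Complex.I := by
        push_cast; ring
      rw [this]
      exact Complex.norm_exp_ofReal_mul_I _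
    rw [h1, h2, mul_one]
  -- bound on the integral, with pointwise bound c on the kernel
  have hIB : ∀ (l : ℤ) (r c : ℝ), 0 < r → 0 ≤ c →
      (∀ t ∈ Ioc (0:ℝ) M, (min r t / max r t) ^ ν l ≤ c) →
      ‖∫ t in (0 : ℝ)..M,
          (((min r t / max r t) ^ ν l : ℝ) : ℂ) * f l t * (t : ℂ)‖ ≤ c * A l := by
    intro l r c hr hc hbd
    calc ‖∫ t in (0 : ℝ)..M, (((min r t / max r t) ^ ν l : ℝ) : ℂ) * f l t * (t : ℂ)‖
        ≤ ∫ t in (0 : ℝ)..M, ‖(((min r t / max r t) ^ ν l : ℝ) : ℂ) * f l t * (t : ℂ)‖ :=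
          intervalIntegral.norm_integral_le_integral_norm hM'
      _ = ∫ t in Ioc (0:ℝ) M,
            ‖(((min r t / max r t) ^ ν l : ℝ) : ℂ) * f l t * (t : ℂ)‖ :=
          intervalIntegral.integral_of_le hM'
      _ ≤ ∫ t in Ioc (0:ℝ) M, c * (‖f l t‖ * t) := by
          apply integral_mono_of_nonneg (Eventually.of_forall fun t => norm_nonneg _)
            ((hInt l).const_mul c)
          filter_upwards [ae_restrict_mem measurableSet_Ioc] with t ht
          have ht0 : 0 < t := ht.1
          have hmin : 0 ≤ min r t := le_min hr.le ht0.le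
          have hmax : 0 < max r t := lt_max_of_lt_left hr
          rw [norm_mul, norm_mul, Complex.norm_real, Complex.norm_real,
            Real.norm_eq_abs, Real.norm_eq_abs,
            _root_.abs_of_nonneg (Real.rpow_nonneg (by positivity) _), _root_.abs_of_pos ht0,
            mul_assoc]
          exact mul_le_mul (hbd t ht) le_rfl (by positivity) hc
      _ = c * A l := by rw [hAdef]; exact integral_const_mul c _
  -- uniform bound : each term is at most a l
  have hbound : ∀ (r θ : ℝ) (l : ℤ), 0 < r →
      ‖(((1 / (2 * ν l)) : ℝ) : ℂ) *
          (∫ t in (0 : ℝ)..M,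
            (((min r t / max r t) ^ ν l : ℝ) : ℂ) * f l t * (t : ℂ)) *
          Complex.exp (Complex.I * (l : ℂ) * (θ : ℂ))‖ ≤ a l := by
    intro r θ l hr
    rw [hnorm]
    have h1 : ‖∫ t in (0 : ℝ)..M,
        (((min r t / max r t) ^ ν l : ℝ) : ℂ) * f l t * (t : ℂ)‖ ≤ 1 * A l := by
      apply hIB l r 1 hr zero_le_one
      intro t ht
      have ht0 : 0 < t := ht.1
      have hmin : 0 ≤ min r t := le_min hr.le ht0.le
      have hmax : 0 < max r t := lt_max_of_lt_left hr
      exact Real.rpow_le_one (by positivity) (div_le_one_of_le₀ (min_le_max) hmax.le)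
        (abs_nonneg _)
    rw [one_mul] at h1
    rw [hadef]
    have hν := hν0 l
    exact mul_le_mul_of_nonneg_left h1 (by positivity)
  -- decay bound for r ≥ M
  have hbound2 : ∀ (r θ : ℝ) (l : ℤ), M ≤ r → 0 < r →
      ‖(((1 / (2 * ν l)) : ℝ) : ℂ) *
          (∫ t in (0 : ℝ)..M,
            (((min r t / max r t) ^ ν l : ℝ) : ℂ) * f l t * (t : ℂ)) *
          Complex.exp (Complex.I * (l : ℂ) * (θ : ℂ))‖ ≤ (M / r) ^ β * a l := by
    intro r θ l hMr hr
    rw [hnorm]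
    have h1 : ‖∫ t in (0 : ℝ)..M,
        (((min r t / max r t) ^ ν l : ℝ) : ℂ) * f l t * (t : ℂ)‖ ≤ (M / r) ^ β * A l := by
      apply hIB l r _ hr (Real.rpow_nonneg (by positivity) _)
      intro t ht
      have ht0 : 0 < t := ht.1
      have htr : t ≤ r := ht.2.trans hMr
      rw [min_eq_right htr, max_eq_left htr]
      calc (t / r) ^ ν l ≤ (t / r) ^ β :=
            Real.rpow_le_rpow_of_exponent_ge (by positivity)
              ((div_le_one hr).mpr htr) (hνβ l)
        _ ≤ (M / r) ^ β := by
            apply Real.rpow_le_rpow (by positivity) _ hβ0.le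
            gcongr
            exact ht.2
    have hν := hν0 l
    calc 1 / (2 * ν l) * ‖∫ t in (0 : ℝ)..M,
          (((min r t / max r t) ^ ν l : ℝ) : ℂ) * f l t * (t : ℂ)‖
        ≤ 1 / (2 * ν l) * ((M / r) ^ β * A l) :=
          mul_le_mul_of_nonneg_left h1 (by positivity)
      _ = (M / r) ^ β * a l := by rw [hadef]; ring
  -- summability of a
  have hsum_upper : Summable (fun l : ℤ =>
      1/4 * (∫ r in (0:ℝ)..M, ‖f l r‖ ^ 2 * r) + M^2/8 * (1 / ν l ^ 2)) :=
    (hL2.mul_left (1/4)).add (hν2.mul_left (M^2/8))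
  have ha : Summable a := by
    refine Summable.of_nonneg_of_le ha0 (fun l => ?_) hsum_upper
    · 
      have hν := hν0 l
      have hIeq : (∫ r in (0:ℝ)..M, ‖f l r‖^2*r) = ∫ t in Ioc (0:ℝ) M, ‖f l t‖^2*t :=
        intervalIntegral.integral_of_le hM'
      have h1 : IntegrableOn (fun r => ‖f l r‖ ^ 2 * r) (Ioc (0:ℝ) M) volume :=
        (intervalIntegrable_iff_integrableOn_Ioc_of_le hM').mp (hint l)
      have h2 : IntegrableOn (fun t : ℝ => t / ν l) (Ioc (0:ℝ) M) volume :=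
        by apply Integrable.div_const; exact continuous_id.integrableOn_Ioc
      have hstep : A l ≤ ∫ t in Ioc (0:ℝ) M, (ν l * (‖f l t‖^2*t) + t/ν l)/2 := by
        apply setIntegral_mono_on (hInt l) (hIntU l) measurableSet_Ioc
        intro t ht
        exact hamgm l t ht.1.le
      have hTint : ∫ t in Ioc (0:ℝ) M, t = M^2/2 := by
        rw [← intervalIntegral.integral_of_le hM', integral_id]
        ring
      have hcomp : (∫ t in Ioc (0:ℝ) M, (ν l * (‖f l t‖^2*t) + t/ν l)/2)
          = (ν l * (∫ t in Ioc (0:ℝ) M, ‖f l t‖^2*t) + (M^2/2)/ν l)/2 := by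
        rw [integral_div, integral_add (h1.const_mul (ν l)) h2, integral_const_mul,
          integral_div, hTint]
      have hAle : A l ≤ (ν l * (∫ r in (0:ℝ)..M, ‖f l r‖^2*r) + (M^2/2)/ν l)/2 := by
        rw [hIeq]; rw [hcomp] at hstep; exact hstep
      have heq : 1/(2 * ν l) * ((ν l * (∫ r in (0:ℝ)..M, ‖f l r‖^2*r) + (M^2/2)/ν l)/2)
          = 1/4 * (∫ r in (0:ℝ)..M, ‖f l r‖ ^ 2 * r) + M^2/8 * (1 / ν l ^ 2) := by
        field_simp
        ring
      calc a l ≤ 1/(2 * ν l) * ((ν l * (∫ r in (0:ℝ)..M, ‖f l r‖^2*r) + (M^2/2)/ν l)/2) := by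
            rw [hadef]
            exact mul_le_mul_of_nonneg_left hAle (by positivity)
        _ = _ := heq
  -- part 1
  have part1 : ∀ r θ : ℝ, 0 < r →
      Summable fun l : ℤ =>
        ‖(((1 / (2 * ν l)) : ℝ) : ℂ) *
            (∫ t in (0 : ℝ)..M,
              (((min r t / max r t) ^ ν l : ℝ) : ℂ) * f l t * (t : ℂ)) *
            Complex.exp (Complex.I * (l : ℂ) * (θ : ℂ))‖ := by
    intro r θ hr
    exact Summable.of_nonneg_of_le (fun l => norm_nonneg _) (fun l => hbound r θ l hr) ha
  refine ⟨part1, ?_⟩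
  -- part 2
  set S := ∑' l, a l with hSdef
  have key : ∀ r : ℝ, max M 1 ≤ r → ∀ θ : ℝ,
      ‖∑' l : ℤ,
          (((1 / (2 * ν l)) : ℝ) : ℂ) *
            (∫ t in (0 : ℝ)..M,
              (((min r t / max r t) ^ ν l : ℝ) : ℂ) * f l t * (t : ℂ)) *
            Complex.exp (Complex.I * (l : ℂ) * (θ : ℂ))‖ ≤ (M / r) ^ β * S := by
    intro r hr θ
    have hr0 : (0:ℝ) < r := lt_of_lt_of_le one_pos ((le_max_right M 1).trans hr)
    have hrM : M ≤ r := (le_max_left M 1).trans hr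
    have hsum := part1 r θ hr0
    calc ‖∑' l : ℤ, _‖ ≤ ∑' l : ℤ,
          ‖(((1 / (2 * ν l)) : ℝ) : ℂ) *
            (∫ t in (0 : ℝ)..M,
              (((min r t / max r t) ^ ν l : ℝ) : ℂ) * f l t * (t : ℂ)) *
            Complex.exp (Complex.I * (l : ℂ) * (θ : ℂ))‖ :=
        norm_tsum_le_tsum_norm hsum
      _ ≤ ∑' l : ℤ, (M / r) ^ β * a l :=
        Summable.tsum_le_tsum (fun l => hbound2 r θ l hrM hr0) hsum (ha.mul_left _)
      _ = (M / r) ^ β * S := tsum_mul_left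
  intro ε hε
  have ht : Tendsto (fun r : ℝ => M ^ β * S / r ^ β) atTop (nhds 0) :=
    Tendsto.div_atTop tendsto_const_nhds (tendsto_rpow_atTop hβ0)
  obtain ⟨R₀, hR₀⟩ := eventually_atTop.mp (ht.eventually_lt_const hε)
  refine ⟨max R₀ (max M 1), fun r hr θ => ?_⟩
  have hr1 : max M 1 ≤ r := (le_max_right _ _).trans hr
  have hr0 : (0:ℝ) < r := lt_of_lt_of_le one_pos ((le_max_right M 1).trans hr1)
  have h1 := key r hr1 θ
  have h2 := hR₀ r ((le_max_left _ _).trans hr)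
  have h3 : (M / r) ^ β * S = M ^ β * S / r ^ β := by
    rw [Real.div_rpow hM' hr0.le]; ring
  calc ‖∑' l : ℤ, _‖ ≤ (M / r) ^ β * S := h1
    _ = M ^ β * S / r ^ β := h3
    _ < ε := h2
end
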